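/- Let d ≥ 2 and suppose ℂ^d admits a family of d+1 mutually unbiased orthonormal bases, with rank-one projections Π_{nk} for n = 1,…,d+1 and k = 1,…,d. Then every Hermitian d×d matrix ρ can be written as ρ = Σ_{n=1}^{d+1} Σ_{k=1}^{d} λ_{nk} Π_{nk} for some real coefficients λ_{nk}; in other words, the d(d+1) projections Π_{nk} span the real vector space of Hermitian d×d matrices. -/

import Mathlib

open scoped BigOperators

/-- Rank-one orthogonal projection `|v⟩⟨v|` onto a vector `v ∈ ℂ^d`, as a matrix. -/
noncomputable def proj {d : ℕ} (v : EuclideanSpace ℂ (Fin d)) : Matrix (Fin d) (Fin d) ℂ :=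
  Matrix.of fun i j => v i * star (v j)

/-- A family of orthonormal bases of `ℂ^d` is mutually unbiased if
`|⟨e n k, e m l⟩|² = 1/d` for all `n ≠ m` and all `k, l`. -/
def MutuallyUnbiased {d N : ℕ} (e : Fin N → Fin d → EuclideanSpace ℂ (Fin d)) : Prop :=
  ∀ n m : Fin N, n ≠ m → ∀ k l : Fin d,
    ‖(inner ℂ (e n k) (e m l) : ℂ)‖ ^ 2 = 1 / d

/-! Over `ℂ` the projections already span all `d × d` matrices. Since `∑ₖ Πₙₖ = 1`, their span
contains `1` and the `(d + 1)(d - 1)` traceless matrices `Πₙₖ - Πₙ,d` (`k < d`). These are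
independent: `tr (Πₙ'ₖ' (Πₙₖ - Πₙ,d)) = δₙₙ' δₖₖ'`, because for `n ≠ n'` both terms equal `1 / d`
by unbiasedness, and `1` has nonzero trace, so it lies outside their span. That makes
`1 + (d + 1)(d - 1) = d²` independent matrices. A Hermitian `ρ = ∑ cₙₖ Πₙₖ` equals its real part
`∑ (re cₙₖ) Πₙₖ`, because every `Πₙₖ` is Hermitian. -/

open Matrix ComplexStarModule

lemma IsSelfAdjoint.eq_sum_re_smul {A ι : Type*} [AddCommGroup A] [Module ℂ A]
    [StarAddMonoid A] [StarModule ℂ A] [Fintype ι] {x : A} (hx : IsSelfAdjoint x)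
    {a : ι → A} (ha : ∀ i, IsSelfAdjoint (a i)) {c : ι → ℂ} (h : x = ∑ i, c i • a i) :
    x = ∑ i, ((c i).re : ℂ) • a i := by
  calc x = ℜ x := hx.coe_realPart.symm
    _ = ∑ i, (ℜ (c i • a i) : A) := by rw [h, map_sum, AddSubmonoidClass.coe_finsetSum]
    _ = ∑ i, ((c i).re : ℂ) • a i := by
        simp only [realPart_smul, (ha _).imaginaryPart, smul_zero, sub_zero,
          selfAdjoint.val_smul, (ha _).coe_realPart, Complex.coe_smul]

section Projections

variable {d : ℕ}

lemma trace_proj (u : EuclideanSpace ℂ (Fin d)) : (proj u).trace = inner ℂ u u := by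
  simp only [trace, diag, proj, of_apply, PiLp.inner_apply, RCLike.inner_apply,
    starRingEnd_apply]

lemma trace_proj_mul_proj (u v : EuclideanSpace ℂ (Fin d)) :
    (proj u * proj v).trace = ((‖(inner ℂ u v : ℂ)‖ ^ 2 : ℝ) : ℂ) := by
  push_cast
  rw [← Complex.mul_conj']
  simp only [trace, diag, mul_apply, proj, of_apply, PiLp.inner_apply, RCLike.inner_apply,
    map_sum, map_mul, Finset.sum_mul_sum, starRingEnd_apply, star_star]
  rw [Finset.sum_comm]
  exact Finset.sum_congr rfl fun i _ => Finset.sum_congr rfl fun j _ => by ring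

lemma isHermitian_proj (u : EuclideanSpace ℂ (Fin d)) : (proj u).IsHermitian := by
  ext i j; simp [proj, mul_comm]

lemma sum_proj_eq_one {v : Fin d → EuclideanSpace ℂ (Fin d)} (hv : Orthonormal ℂ v) :
    ∑ k, proj (v k) = 1 := by
  set U : Matrix (Fin d) (Fin d) ℂ := of fun i k => v k i
  have hU : Uᴴ * U = 1 := by
    ext k l
    have := orthonormal_iff_ite.mp hv k l
    simp only [PiLp.inner_apply, RCLike.inner_apply, starRingEnd_apply] at this
    simp [U, mul_apply, one_apply, ← this, mul_comm]
  rw [← mul_eq_one_comm.mp hU]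
  ext i j
  simp [U, mul_apply, proj, Matrix.sum_apply]

end Projections

section MutuallyUnbiased

variable {d N : ℕ}

lemma MutuallyUnbiased.trace_proj_mul_proj {e : Fin N → Fin d → EuclideanSpace ℂ (Fin d)}
    (horth : ∀ n, Orthonormal ℂ (e n)) (hmub : MutuallyUnbiased e) (n n' : Fin N)
    (k k' : Fin d) :
    (proj (e n k) * proj (e n' k')).trace =
      if n = n' then (if k = k' then 1 else 0) else (d : ℂ)⁻¹ := by
  rw [_root_.trace_proj_mul_proj]
  split_ifs with hn hk
  · subst hn hk
    simp [(horth n).1 k]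
  · subst hn
    simp [(horth n).2 hk]
  · simp [hmub n n' hn k k']

noncomputable def projSubProjLast (e : Fin N → Fin (d + 1) → EuclideanSpace ℂ (Fin (d + 1)))
    (p : Fin N × Fin d) : Matrix (Fin (d + 1)) (Fin (d + 1)) ℂ :=
  proj (e p.1 p.2.castSucc) - proj (e p.1 (Fin.last d))

variable {e : Fin N → Fin (d + 1) → EuclideanSpace ℂ (Fin (d + 1))}

lemma linearIndependent_projSubProjLast (horth : ∀ n, Orthonormal ℂ (e n))
    (hmub : MutuallyUnbiased e) : LinearIndependent ℂ (projSubProjLast e) := by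
  refine .of_pairwise_dual_eq_zero_one _
    (fun p => (traceLinearMap _ ℂ ℂ).comp (LinearMap.mulLeft ℂ (proj (e p.1 p.2.castSucc))))
    ?_ ?_
  · rintro ⟨n, k⟩ ⟨n', k'⟩ hne
    by_cases hn : n = n'
    · subst hn
      have hk : k ≠ k' := fun hk => hne (by rw [hk])
      simp [projSubProjLast, mul_sub, hmub.trace_proj_mul_proj horth, hk, Fin.castSucc_ne_last]
    · simp [projSubProjLast, mul_sub, hmub.trace_proj_mul_proj horth, hn]
  · rintro ⟨n, k⟩
    simp [projSubProjLast, mul_sub, hmub.trace_proj_mul_proj horth, Fin.castSucc_ne_last]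

lemma trace_projSubProjLast (horth : ∀ n, Orthonormal ℂ (e n)) (p : Fin N × Fin d) :
    (projSubProjLast e p).trace = 0 := by
  simp [projSubProjLast, trace_proj, (horth _).1]

lemma one_notMem_span_projSubProjLast (horth : ∀ n, Orthonormal ℂ (e n)) :
    (1 : Matrix (Fin (d + 1)) (Fin (d + 1)) ℂ) ∉
      Submodule.span ℂ (Set.range (projSubProjLast e)) := by
  intro h
  have htrace : Submodule.span ℂ (Set.range (projSubProjLast e)) ≤
      LinearMap.ker (traceLinearMap _ ℂ ℂ) :=
    Submodule.span_le.mpr <| by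
      rintro _ ⟨p, rfl⟩
      exact trace_projSubProjLast horth p
  exact Nat.cast_add_one_ne_zero d (by simpa using htrace h)

end MutuallyUnbiased

theorem span_proj_eq_top {d : ℕ} {e : Fin (d + 1) → Fin d → EuclideanSpace ℂ (Fin d)}
    (horth : ∀ n, Orthonormal ℂ (e n)) (hmub : MutuallyUnbiased e) :
    Submodule.span ℂ (Set.range fun p : Fin (d + 1) × Fin d => proj (e p.1 p.2)) = ⊤ := by
  obtain _ | d := d
  · exact Subsingleton.elim _ _
  set W := Submodule.span ℂ (Set.range fun p : Fin (d + 2) × Fin (d + 1) => proj (e p.1 p.2))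
  have hproj : ∀ n k, proj (e n k) ∈ W := fun n k => Submodule.subset_span ⟨(n, k), rfl⟩
  have hone : 1 ∈ W := sum_proj_eq_one (horth 0) ▸ Submodule.sum_mem _ fun k _ => hproj 0 k
  have hli := (linearIndependent_projSubProjLast horth hmub).option
    (one_notMem_span_projSubProjLast horth)
  have hcard : Fintype.card (Option (Fin (d + 2) × Fin d)) =
      Module.finrank ℂ (Matrix (Fin (d + 1)) (Fin (d + 1)) ℂ) := by
    simp [Module.finrank_matrix]
    ring
  rw [eq_top_iff, ← hli.span_eq_top_of_card_eq_finrank' hcard, Submodule.span_le]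
  rintro _ ⟨_ | p, rfl⟩
  · exact hone
  · exact W.sub_mem (hproj _ _) (hproj _ _)

theorem stmt_2_general (d : ℕ)
    (e : Fin (d + 1) → Fin d → EuclideanSpace ℂ (Fin d))
    (horth : ∀ n, Orthonormal ℂ (e n))
    (hmub : MutuallyUnbiased e)
    (ρ : Matrix (Fin d) (Fin d) ℂ) (hρ : ρ.IsHermitian) :
    ∃ lam : Fin (d + 1) → Fin d → ℝ,
      ρ = ∑ n : Fin (d + 1), ∑ k : Fin d, (lam n k : ℂ) • proj (e n k) := by
  have hmem : ρ ∈ Submodule.span ℂ (Set.range fun p : Fin (d + 1) × Fin d => proj (e p.1 p.2)) :=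
    span_proj_eq_top horth hmub ▸ Submodule.mem_top
  obtain ⟨c, hc⟩ := (Submodule.mem_span_range_iff_exists_fun ℂ).mp hmem
  refine ⟨fun n k => (c (n, k)).re, ?_⟩
  rw [← Fintype.sum_prod_type']
  exact hρ.isSelfAdjoint.eq_sum_re_smul (fun p => (isHermitian_proj _).isSelfAdjoint) hc.symm

theorem stmt_2 (d : ℕ) (hd : 2 ≤ d)
    (e : Fin (d + 1) → Fin d → EuclideanSpace ℂ (Fin d))
    (horth : ∀ n, Orthonormal ℂ (e n))
    (hmub : MutuallyUnbiased e)
    (ρ : Matrix (Fin d) (Fin d) ℂ) (hρ : ρ.IsHermitian) :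
    ∃ lam : Fin (d + 1) → Fin d → ℝ,
      ρ = ∑ n : Fin (d + 1), ∑ k : Fin d, (lam n k : ℂ) • proj (e n k) :=
  stmt_2_general d e horth hmub ρ hρ
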